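/- Let κ be a regular cardinal. Then DC_κ is equivalent to DC*_κ, where DC*_κ asserts: for every set X with X ⊀ κ and every F : (X)^{<κ} → 𝒫(X)\{∅} such that for all injective t of length < κ and all x ∈ F(t) the extension t⌢x is injective, there is g : κ → X with g(i) ∈ F(g ↾ i) for all i < κ. -/

import Mathlib

universe u

/-- `X ≼ Y`: there is an injection from `X` into `Y`. -/
def Inj (X Y : Type u) : Prop := ∃ f : X → Y, Function.Injective f

/-- `X ≺ Y`: `X ≼ Y` and not `Y ≼ X`. -/
def SInj (X Y : Type u) : Prop := Inj X Y ∧ ¬ Inj Y X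

/-- A condition in `Coll(κ,X)`: an injective function from a proper initial segment of
(the canonical well-order of type) `κ` into `X`.  Proper initial segments of `κ.ord.ToType`
correspond exactly to the ordinals `β < κ`. -/
structure Coll (κ : Cardinal.{u}) (X : Type u) : Type u where
  dom : κ.ord.ToType
  f : Set.Iio dom → X
  inj : Function.Injective f

/-- The extension order of `Coll(κ,X)`: `p ≤ q` iff `p` extends `q`. -/
def Coll.le {κ : Cardinal.{u}} {X : Type u} (p q : Coll κ X) : Prop :=
  ∃ h : q.dom ≤ p.dom, ∀ (i : κ.ord.ToType) (hi : i < q.dom),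
    p.f ⟨i, lt_of_lt_of_le hi h⟩ = q.f ⟨i, hi⟩

/-- The (open dense) set `L^X_i` of conditions of length at least `i`. -/
def CollL {κ : Cardinal.{u}} {X : Type u} (i : κ.ord.ToType) : Set (Coll κ X) :=
  {p | i ≤ p.dom}

/-- A filter on a set equipped with a relation `le`: nonempty, upward closed and
downward directed. -/
def IsFilt {P : Type u} (le : P → P → Prop) (G : Set P) : Prop :=
  G.Nonempty ∧ (∀ p ∈ G, ∀ q, le p q → q ∈ G) ∧
    ∀ p ∈ G, ∀ q ∈ G, ∃ r ∈ G, le r p ∧ le r q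

/-- `D` is dense: every condition has an extension in `D`. -/
def IsDense {P : Type u} (le : P → P → Prop) (D : Set P) : Prop :=
  ∀ p, ∃ q ∈ D, le q p

/-- `D` is open: closed under extensions. -/
def IsOpen' {P : Type u} (le : P → P → Prop) (D : Set P) : Prop :=
  ∀ p ∈ D, ∀ q, le q p → q ∈ D


/-- `DC_α`: for every set `Y` and function `F'` from sequences from `Y` of length `< α`
to nonempty subsets of `Y`, there is `g : α → Y` with `g i ∈ F' (g ↾ i)` for all `i < α`. -/
def DCord (α : Ordinal.{u}) : Prop :=
  ∀ (Y : Type u) (F' : (Σ i : α.ToType, (Set.Iio i → Y)) → Set Y),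
    (∀ t, (F' t).Nonempty) →
    ∃ g : α.ToType → Y, ∀ i : α.ToType, g i ∈ F' ⟨i, fun j => g j.1⟩

/-- `(X)^{<κ}`: injective sequences from `X` of length `< κ`. -/
def ISeq (κ : Cardinal.{u}) (X : Type u) : Type u :=
  Σ i : κ.ord.ToType, {f : Set.Iio i → X // Function.Injective f}

/-- The restriction of a condition `p ∈ Coll(κ,X)` to the initial segment below `i`. -/
def Coll.restrict {κ : Cardinal.{u}} {X : Type u} (p : Coll κ X)
    (i : κ.ord.ToType) (h : i < p.dom) : ISeq κ X :=
  ⟨i, ⟨fun j => p.f ⟨j.1, j.2.trans h⟩, fun _ _ hab => by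
    have := p.inj hab
    exact Subtype.ext (Subtype.mk.inj this)⟩⟩

/-- The tree `𝕋(F)` of conditions obeying `F`, as a subposet of `Coll(κ,X)`. -/
def TT {κ : Cardinal.{u}} {X : Type u} (F : ISeq κ X → Set X) : Type u :=
  {p : Coll κ X // ∀ (i : κ.ord.ToType) (h : i < p.dom), p.f ⟨i, h⟩ ∈ F (p.restrict i h)}

/-- The extension order on `𝕋(F)`. -/
def TTle {κ : Cardinal.{u}} {X : Type u} {F : ISeq κ X → Set X} (s t : TT F) : Prop :=
  Coll.le s.1 t.1

/-- `DC*_κ`: dependent choice for functions on injective sequences avoiding their range. -/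
def DCstar (κ : Cardinal.{u}) : Prop :=
  ∀ X : Type u, ¬ SInj X κ.ord.ToType →
    ∀ F : ISeq κ X → Set X,
      (∀ t, ∀ x ∈ F t, x ∉ Set.range t.2.1) →
      (∀ t, (F t).Nonempty) →
      ∃ (g : κ.ord.ToType → X) (hg : Function.Injective g),
        ∀ i : κ.ord.ToType,
          g i ∈ F ⟨i, ⟨fun j => g j.1, fun _ _ hab => Subtype.ext (hg hab)⟩⟩

/-- Auxiliary: the function on injective sequences of pairs used in `DC*_κ → DC_κ`. -/
def Faux {κ : Cardinal.{u}} {Y : Type u}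
    (F' : (Σ i : κ.ord.ToType, (Set.Iio i → Y)) → Set Y) :
    ISeq κ (Y × κ.ord.ToType) → Set (Y × κ.ord.ToType) :=
  fun t => {p | p.1 ∈ F' ⟨t.1, fun j => (t.2.1 j).1⟩ ∧ p ∉ Set.range t.2.1}

/-- For a regular cardinal `κ`, `DC_κ` is equivalent to `DC*_κ`. -/
theorem DC_iff_DCstar (κ : Cardinal.{u}) (hκ : κ.IsRegular) :
    DCord κ.ord ↔ DCstar κ := by
  classical
  constructor
  · -- DC_κ → DC*_κ
    intro dc X _hX F havoid hne
    set F' : (Σ i : κ.ord.ToType, (Set.Iio i → X)) → Set X :=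
      fun t => if h : Function.Injective t.2 then F ⟨t.1, ⟨t.2, h⟩⟩ else Set.univ with hF'
    have hne' : ∀ t, (F' t).Nonempty := by
      rintro ⟨i, f⟩
      by_cases h : Function.Injective f
      · simpa [F', h] using hne ⟨i, ⟨f, h⟩⟩
      · obtain ⟨a, b, hab, -⟩ := Function.not_injective_iff.1 h
        exact ⟨f a, by simp only [F']; rw [dif_neg h]; trivial⟩
    obtain ⟨g, hg⟩ := dc X F' hne'
    have hinjres : ∀ k : κ.ord.ToType,
        (∀ j < k, g j ≠ g k) →
        Function.Injective (fun j : Set.Iio k => g j.1) → True := fun _ _ _ => trivial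
    have key : ∀ k : κ.ord.ToType, ∀ j < k, g j ≠ g k := by
      intro k
      induction k using WellFoundedLT.induction with
      | ind k IH =>
        have hinj : Function.Injective (fun j : Set.Iio k => g j.1) := by
          intro a b hab
          rcases lt_trichotomy a.1 b.1 with h | h | h
          · exact absurd hab (IH b.1 b.2 a.1 h)
          · exact Subtype.ext h
          · exact absurd hab.symm (IH a.1 a.2 b.1 h)
        have hm : g k ∈ F' ⟨k, fun j => g j.1⟩ := hg k
        rw [show F' ⟨k, fun j => g j.1⟩ = F ⟨k, ⟨fun j => g j.1, hinj⟩⟩ from dif_pos hinj]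
          at hm
        have hav := havoid _ _ hm
        intro j hj hgj
        exact hav ⟨⟨j, hj⟩, hgj⟩
    have hginj : Function.Injective g := by
      intro a b hab
      by_contra hab'
      rcases lt_or_gt_of_ne hab' with h | h
      · exact key b a h hab
      · exact key a b h hab.symm
    refine ⟨g, hginj, fun i => ?_⟩
    have hinj : Function.Injective (fun j : Set.Iio i => g j.1) :=
      fun a b hab => Subtype.ext (hginj hab)
    have hm : g i ∈ F' ⟨i, fun j => g j.1⟩ := hg i
    rw [show F' ⟨i, fun j => g j.1⟩ = F ⟨i, ⟨fun j => g j.1, hinj⟩⟩ from dif_pos hinj] at hm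
    exact hm
  · -- DC*_κ → DC_κ
    intro dcs Y F' hne'
    have hκ0 : κ.ord ≠ 0 := by
      intro h
      have : κ = 0 := by
        have := Cardinal.card_ord κ
        rw [h] at this
        simpa using this.symm
      rw [this] at hκ
      exact absurd hκ.aleph0_le (by simp [Cardinal.aleph0_ne_zero])
    have hnt : Nonempty κ.ord.ToType := Ordinal.nonempty_toType_iff.2 hκ0
    -- Y is nonempty
    obtain ⟨m, -, hm⟩ := (wellFounded_lt (α := κ.ord.ToType)).has_min Set.univ
      ⟨Classical.arbitrary _, trivial⟩
    have hY : Nonempty Y := by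
      obtain ⟨y, -⟩ := hne' ⟨m, fun j => absurd j.2 (hm j.1 trivial)⟩
      exact ⟨y⟩
    obtain ⟨y₀⟩ := hY
    set X := Y × κ.ord.ToType with hX
    have hnotS : ¬ SInj X κ.ord.ToType := by
      rintro ⟨-, h2⟩
      exact h2 ⟨fun c => (y₀, c), fun a b hab => congrArg Prod.snd hab⟩
    have havoid : ∀ t, ∀ x ∈ Faux F' t, x ∉ Set.range t.2.1 := fun t x hx => hx.2
    have hneF : ∀ t, (Faux F' t).Nonempty := by
      rintro ⟨i, f, hf⟩
      obtain ⟨y, hy⟩ := hne' ⟨i, fun j => (f j).1⟩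
      have hc : ∃ c : κ.ord.ToType, (y, c) ∉ Set.range f := by
        by_contra hc
        push_neg at hc
        choose e he using hc
        have hinj : Function.Injective e := by
          intro c₁ c₂ h
          have h1 := he c₁
          have h2 := he c₂
          rw [h] at h1
          exact congrArg Prod.snd (h1.symm.trans h2)
        have hle : κ ≤ Cardinal.mk (Set.Iio i) := by
          calc κ = κ.ord.card := (Cardinal.card_ord κ).symm
          _ = Cardinal.mk (κ.ord.ToType) := (Cardinal.mk_toType κ.ord).symm
          _ ≤ Cardinal.mk (Set.Iio i) := Cardinal.mk_le_of_injective hinj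
        exact absurd (lt_of_le_of_lt hle (Cardinal.mk_Iio_ord_toType i)) (lt_irrefl κ)
      obtain ⟨c, hcr⟩ := hc
      exact ⟨(y, c), hy, hcr⟩
    obtain ⟨gX, hgX, hgmem⟩ := dcs X hnotS (Faux F') havoid hneF
    exact ⟨fun i => (gX i).1, fun i => (hgmem i).1⟩
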